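/- Theorem 1 (LRT achieves bounded regret — bounded expected number of suboptimal selections). Let i ∈ {0,1} be the true demand model and consider a pricing process under model i that follows the LRT policy. Set a_i = min over k ∈ Fin 2 of I(q i k ‖ q (1−i) k). Then a_i > 0, and for every horizon T ≥ 1, E[#{t : 1 ≤ t ≤ T, a_t ≠ i}] ≤ 1 + (M − m)² / (2 a_i²); in particular the expected number of times the LRT policy selects the suboptimal arm is bounded by a constant independent of T. -/

import Mathlib

/-!
Let `ℓ t` be the log-likelihood ratio of the true model `i` against the other model after `t`
sales, so that the LRT policy offers the suboptimal price at time `t + 1` only if `ℓ t ≤ 0`.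
The increments of `ℓ` have conditional mean at least `aᵢ` (a Kullback–Leibler divergence) and
range in an interval of length `M - m`, so by Hoeffding's lemma `exp (-λ ℓ t)` with
`λ = 4 aᵢ / (M - m)²` has mean at most `ρ ^ t`, where `ρ = exp (-2 aᵢ² / (M - m)²)`. Bounding the
indicator of a suboptimal selection at time `t + 1` by `exp (-λ ℓ t)` gives the bound
`∑ ρ ^ t ≤ 1 / (1 - ρ) ≤ 1 + (M - m)² / (2 aᵢ²)`.
-/

open MeasureTheory ProbabilityTheory Finset Real

noncomputable section

/-- Probability of outcome `y ∈ {0,1}` under a Bernoulli distribution with success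
probability `p`:  `f p y = p^y (1-p)^(1-y)`. -/
def bern (p : ℝ) (y : ℕ) : ℝ := p ^ y * (1 - p) ^ (1 - y)

/-- The Kullback–Leibler divergence between Bernoulli(α) and Bernoulli(β). -/
def klBern (α β : ℝ) : ℝ :=
  α * Real.log (α / β) + (1 - α) * Real.log ((1 - α) / (1 - β))

variable {Ω : Type*} {mΩ : MeasurableSpace Ω}

/-- The (unnormalized) log-likelihood statistic
`L t = ∑_{j=1}^t log (f₁^{a_j}(y_j) / f₀^{a_j}(y_j))`, with `L 0 = 0`. -/
def LLR (q : Fin 2 → Fin 2 → ℝ) (a : ℕ → Ω → Fin 2) (y : ℕ → Ω → ℕ) (t : ℕ) (ω : Ω) : ℝ :=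
  ∑ j ∈ Finset.Icc 1 t,
    Real.log (bern (q 1 (a j ω)) (y j ω) / bern (q 0 (a j ω)) (y j ω))

/-- A pricing process under true demand model `i`: actions `a t` are `ℱ (t-1)`-measurable,
outcomes `y t ∈ {0,1}` are `ℱ t`-measurable, and the conditional probability of a successful
sale at time `t` given the past is `q i (a t)` almost surely. -/
structure IsPricingProcess (μ : Measure Ω) (ℱ : Filtration ℕ mΩ)
    (q : Fin 2 → Fin 2 → ℝ) (i : Fin 2) (a : ℕ → Ω → Fin 2) (y : ℕ → Ω → ℕ) : Prop where
  meas_a : ∀ t, 1 ≤ t → Measurable[ℱ (t - 1)] (a t)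
  meas_y : ∀ t, 1 ≤ t → Measurable[ℱ t] (y t)
  y_range : ∀ t, 1 ≤ t → ∀ ω, y t ω = 0 ∨ y t ω = 1
  sale_prob : ∀ t, 1 ≤ t →
    μ[Set.indicator {ω | y t ω = 1} (fun _ => (1 : ℝ)) | ℱ (t - 1)]
      =ᵐ[μ] fun ω => q i (a t ω)

/-- The LRT policy: for `t ≥ 1`, `a (t+1) = 1` if `L t ≥ 0` and `a (t+1) = 0` if `L t < 0`. -/
def IsLRT (q : Fin 2 → Fin 2 → ℝ) (a : ℕ → Ω → Fin 2) (y : ℕ → Ω → ℕ) : Prop :=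
  ∀ t, 1 ≤ t → ∀ ω, a (t + 1) ω = if 0 ≤ LLR q a y t ω then 1 else 0

open InformationTheory in
lemma klBern_eq_klFun {α β : ℝ} (hβ : β ∈ Set.Ioo (0 : ℝ) 1) :
    klBern α β = β * klFun (α / β) + (1 - β) * klFun ((1 - α) / (1 - β)) := by
  have : β ≠ 0 := hβ.1.ne'
  have : 1 - β ≠ 0 := by linarith [hβ.2]
  simp only [klBern, klFun]
  field_simp
  ring

open InformationTheory in
lemma klBern_pos {α β : ℝ} (hα : α ∈ Set.Ioo (0 : ℝ) 1) (hβ : β ∈ Set.Ioo (0 : ℝ) 1)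
    (hne : α ≠ β) : 0 < klBern α β := by
  obtain ⟨hα0, hα1⟩ := hα
  obtain ⟨hβ0, hβ1⟩ := hβ
  have hfirst : 0 < β * klFun (α / β) := by
    refine mul_pos hβ0 ((klFun_nonneg (by positivity)).lt_of_ne' fun h => hne ?_)
    rwa [klFun_eq_zero_iff (by positivity), div_eq_one_iff_eq hβ0.ne'] at h
  have hsecond : 0 ≤ (1 - β) * klFun ((1 - α) / (1 - β)) :=
    mul_nonneg (by linarith) (klFun_nonneg (div_nonneg (by linarith) (by linarith)))
  rw [klBern_eq_klFun ⟨hβ0, hβ1⟩]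
  linarith

lemma log_div_ne_log_one_sub_div {α β : ℝ} (hα : α ∈ Set.Ioo (0 : ℝ) 1)
    (hβ : β ∈ Set.Ioo (0 : ℝ) 1) (hne : α ≠ β) :
    log (α / β) ≠ log ((1 - α) / (1 - β)) := by
  obtain ⟨hα0, hα1⟩ := hα
  obtain ⟨hβ0, hβ1⟩ := hβ
  rcases hne.lt_or_gt with h | h
  · have h₁ : log (α / β) < 0 := log_neg (by positivity) ((div_lt_one hβ0).2 h)
    have h₂ : 0 < log ((1 - α) / (1 - β)) := log_pos ((one_lt_div (by linarith)).2 (by linarith))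
    exact h₁.trans h₂ |>.ne
  · have h₁ : 0 < log (α / β) := log_pos ((one_lt_div hβ0).2 h)
    have h₂ : log ((1 - α) / (1 - β)) < 0 :=
      log_neg (div_pos (by linarith) (by linarith)) ((div_lt_one (by linarith)).2 (by linarith))
    exact (h₂.trans h₁).ne'

open unitInterval in
/-- Hoeffding's lemma for a two-point distribution. -/
lemma mul_exp_add_one_sub_mul_exp_le {p : ℝ} (hp : p ∈ Set.Icc (0 : ℝ) 1) (u v t : ℝ) :
    p * exp (t * u) + (1 - p) * exp (t * v)
      ≤ exp (t * (p * u + (1 - p) * v) + t ^ 2 * (u - v) ^ 2 / 8) := by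
  set ν : Measure ℝ := Ber(u, v, ⟨p, hp⟩)
  have hmem : ∀ᵐ z ∂ν, z ∈ Set.Icc (min u v) (max u v) := by
    rw [ae_iff]
    exact bernoulliMeasure_apply_of_notMem_of_notMem _ measurableSet_Icc.compl (by simp) (by simp)
  have hmean : ∫ z, z ∂ν = p * u + (1 - p) * v := by
    simp [ν, integral_bernoulliMeasure]
  have h := (hasSubgaussianMGF_of_mem_Icc aemeasurable_id hmem).mgf_le t
  simp only [mgf, hmean, id, integral_bernoulliMeasure, ν] at h
  rw [NNReal.coe_pow, NNReal.coe_div, coe_nnnorm, Real.norm_eq_abs, max_sub_min_eq_abs, abs_abs,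
    NNReal.coe_ofNat, div_pow, smul_eq_mul, smul_eq_mul] at h
  set μ₀ := p * u + (1 - p) * v
  calc p * exp (t * u) + (1 - p) * exp (t * v)
      = exp (t * μ₀) * (p * exp (t * (u - μ₀)) + (1 - p) * exp (t * (v - μ₀))) := by
        simp only [mul_sub, exp_sub]
        field_simp
    _ ≤ exp (t * μ₀) * exp (|v - u| ^ 2 / 2 ^ 2 * t ^ 2 / 2) := by gcongr
    _ = exp (t * μ₀ + t ^ 2 * (u - v) ^ 2 / 8) := by
        rw [← exp_add, sq_abs]
        ring_nf

/-- Hoeffding's lemma at the exponent `λ = 4κ/R²`, the minimiser of `-λκ + λ²R²/8`. -/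
lemma mul_exp_add_one_sub_mul_exp_le_exp_neg {p κ R u v : ℝ} (hp : p ∈ Set.Icc (0 : ℝ) 1)
    (hκ : 0 ≤ κ) (hmean : κ ≤ p * u + (1 - p) * v) (hR : 0 < R) (huv : |u - v| ≤ R) :
    p * exp (-(4 * κ / R ^ 2) * u) + (1 - p) * exp (-(4 * κ / R ^ 2) * v)
      ≤ exp (-(2 * κ ^ 2 / R ^ 2)) := by
  set lam := 4 * κ / R ^ 2 with hlam
  have hlam0 : 0 ≤ lam := by positivity
  have huv2 : (u - v) ^ 2 ≤ R ^ 2 := by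
    rw [← sq_abs]; exact pow_le_pow_left₀ (abs_nonneg _) huv 2
  refine (mul_exp_add_one_sub_mul_exp_le hp u v (-lam)).trans (exp_le_exp.2 ?_)
  calc -lam * (p * u + (1 - p) * v) + (-lam) ^ 2 * (u - v) ^ 2 / 8
      ≤ -lam * κ + lam ^ 2 * R ^ 2 / 8 := by
        have := mul_le_mul_of_nonneg_left hmean hlam0
        have := mul_le_mul_of_nonneg_left huv2 (sq_nonneg lam)
        nlinarith
    _ = -(2 * κ ^ 2 / R ^ 2) := by
        rw [hlam]; field_simp; ring

lemma sum_range_exp_neg_pow_le {c : ℝ} (hc : 0 < c) (n : ℕ) :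
    ∑ t ∈ range n, exp (-c) ^ t ≤ 1 + 1 / c := by
  have hlt : exp (-c) < 1 := exp_lt_one_iff.2 (neg_neg_of_pos hc)
  rw [range_eq_Ico]
  refine (geom_sum_Ico_le_of_lt_one (exp_pos _).le hlt).trans ?_
  have hc' : c ≤ exp c - 1 := by linarith [add_one_le_exp c]
  have : exp (-c) ^ 0 / (1 - exp (-c)) = 1 + 1 / (exp c - 1) := by
    have : exp c - 1 ≠ 0 := by linarith
    rw [exp_neg]
    field_simp
    ring
  rw [this]
  gcongr

lemma sum_Icc_one_eq_sum_range {β : Type*} [AddCommMonoid β] (f : ℕ → β) (t : ℕ) :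
    ∑ j ∈ Icc 1 t, f j = ∑ j ∈ range t, f (j + 1) := by
  rw [range_eq_Ico, sum_Ico_add' f 0 t 1]
  rfl

section Conditioning

variable {μ : Measure Ω}

lemma integrable_exp_of_le [IsFiniteMeasure μ] {f : Ω → ℝ} {C : ℝ} (hf : Measurable f)
    (hC : ∀ ω, f ω ≤ C) : Integrable (fun ω => exp (f ω)) μ :=
  .of_bound hf.exp.aestronglyMeasurable (exp C) <| ae_of_all _ fun ω => by
    rw [norm_of_nonneg (exp_pos _).le]
    exact exp_le_exp.2 (hC ω)

lemma condExp_comp_eq_of_condExp_indicator {m : MeasurableSpace Ω} [IsFiniteMeasure μ]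
    (hm : m ≤ mΩ) {Y : Ω → ℕ} (hY : ∀ ω, Y ω = 0 ∨ Y ω = 1)
    (hY₁ : MeasurableSet[mΩ] {ω | Y ω = 1}) {p : Ω → ℝ}
    (hp : μ[{ω | Y ω = 1}.indicator (fun _ => (1 : ℝ)) | m] =ᵐ[μ] p) {F : Ω → ℕ → ℝ}
    (hF_meas : ∀ z, StronglyMeasurable[m] (F · z)) (hF_int : ∀ z, Integrable (F · z) μ) :
    μ[fun ω => F ω (Y ω) | m] =ᵐ[μ] fun ω => p ω * F ω 1 + (1 - p ω) * F ω 0 := by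
  set I := {ω | Y ω = 1}.indicator (fun _ => (1 : ℝ))
  have hI_int : Integrable I μ := (integrable_const 1).indicator hY₁
  have hprod_eq :
      (fun ω => F ω 1 - F ω 0) * I = {ω | Y ω = 1}.indicator (fun ω => F ω 1 - F ω 0) := by
    funext ω
    simp [I, Set.indicator_apply]
  have hprod_int : Integrable ((fun ω => F ω 1 - F ω 0) * I) μ := by
    rw [hprod_eq]
    exact ((hF_int 1).sub (hF_int 0)).indicator hY₁
  have hdecomp : (fun ω => F ω (Y ω)) = (F · 0) + (fun ω => F ω 1 - F ω 0) * I := by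
    funext ω
    rcases hY ω with h | h <;> simp [I, h]
  rw [hdecomp]
  filter_upwards [condExp_add (hF_int 0) hprod_int m,
    condExp_mul_of_stronglyMeasurable_left (f := fun ω => F ω 1 - F ω 0)
      ((hF_meas 1).sub (hF_meas 0)) hprod_int hI_int, hp]
    with ω h_add h_mul h_p
  rw [h_add, Pi.add_apply, condExp_of_stronglyMeasurable hm (hF_meas 0) (hF_int 0), h_mul,
    Pi.mul_apply, h_p]
  ring

lemma integrable_exp_sum_of_le [IsFiniteMeasure μ] {D : ℕ → Ω → ℝ} {C : ℝ}
    (hD_meas : ∀ j, Measurable (D j)) (hD_le : ∀ j ω, D j ω ≤ C) (t : ℕ) :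
    Integrable (fun ω => exp (∑ j ∈ range t, D j ω)) μ :=
  integrable_exp_of_le (C := t * C) (Finset.measurable_sum _ fun j _ => hD_meas j)
    fun ω => by simpa using sum_le_sum fun j (_ : j ∈ range t) => hD_le j ω

variable {ℱ : Filtration ℕ mΩ}

lemma integral_exp_sum_le_pow [IsProbabilityMeasure μ] {D : ℕ → Ω → ℝ} {C ρ : ℝ}
    (hD_meas : ∀ j, Measurable[ℱ (j + 1)] (D j)) (hD_le : ∀ j ω, D j ω ≤ C) (hρ : 0 ≤ ρ)
    (hD_cond : ∀ t, μ[fun ω => exp (D t ω) | ℱ t] ≤ᵐ[μ] fun _ => ρ) (t : ℕ) :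
    ∫ ω, exp (∑ j ∈ range t, D j ω) ∂μ ≤ ρ ^ t := by
  set W : ℕ → Ω → ℝ := fun t ω => exp (∑ j ∈ range t, D j ω)
  have hW_meas : ∀ t, Measurable[ℱ t] fun ω => ∑ j ∈ range t, D j ω := fun t =>
    Finset.measurable_sum _ fun j hj => (hD_meas j).mono (ℱ.mono (mem_range.1 hj)) le_rfl
  have hW_int : ∀ t, Integrable (W t) μ :=
    integrable_exp_sum_of_le (fun j => (hD_meas j).mono (ℱ.le _) le_rfl) hD_le
  induction t with
  | zero => simp
  | succ t ih =>
    have hV_int : Integrable (fun ω => exp (D t ω)) μ :=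
      integrable_exp_of_le ((hD_meas t).mono (ℱ.le _) le_rfl) (hD_le t)
    have hsplit : W (t + 1) = W t * fun ω => exp (D t ω) := by
      funext ω
      simp [W, sum_range_succ, exp_add]
    have hmul : μ[W t * fun ω => exp (D t ω) | ℱ t] =ᵐ[μ] W t * μ[fun ω => exp (D t ω) | ℱ t] :=
      condExp_mul_of_stronglyMeasurable_left (hW_meas t).exp.stronglyMeasurable
        (hsplit ▸ hW_int (t + 1)) hV_int
    calc ∫ ω, W (t + 1) ω ∂μ = ∫ ω, (μ[W t * fun ω => exp (D t ω) | ℱ t]) ω ∂μ := by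
          rw [hsplit, integral_condExp (ℱ.le t)]
      _ = ∫ ω, (W t * μ[fun ω => exp (D t ω) | ℱ t]) ω ∂μ := integral_congr_ae hmul
      _ ≤ ∫ ω, W t ω * ρ ∂μ := by
          refine integral_mono_ae (integrable_condExp.congr hmul) ((hW_int t).mul_const ρ) ?_
          filter_upwards [hD_cond t] with ω hω
          exact mul_le_mul_of_nonneg_left hω (exp_pos _).le
      _ = ρ * ∫ ω, W t ω ∂μ := by rw [integral_mul_const, mul_comm]
      _ ≤ ρ * ρ ^ t := by gcongr
      _ = ρ ^ (t + 1) := (pow_succ' ρ t).symm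

end Conditioning

def logLikRatio (q : Fin 2 → Fin 2 → ℝ) (i k : Fin 2) (z : ℕ) : ℝ :=
  log (bern (q i k) z / bern (q (1 - i) k) z)

section LogLikRatio

variable {q : Fin 2 → Fin 2 → ℝ}

lemma logLikRatio_zero (k : Fin 2) (z : ℕ) : logLikRatio q 0 k z = -logLikRatio q 1 k z := by
  rw [logLikRatio, logLikRatio, ← log_inv, inv_div]
  rfl

lemma mean_logLikRatio (i k : Fin 2) :
    q i k * logLikRatio q i k 1 + (1 - q i k) * logLikRatio q i k 0
      = klBern (q i k) (q (1 - i) k) := by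
  simp [logLikRatio, bern, klBern]

lemma LLR_eq_sum_range (a : ℕ → Ω → Fin 2) (y : ℕ → Ω → ℕ) (t : ℕ) (ω : Ω) :
    LLR q a y t ω = ∑ j ∈ range t, logLikRatio q 1 (a (j + 1) ω) (y (j + 1) ω) :=
  sum_Icc_one_eq_sum_range _ t

variable {m M : ℝ}

lemma abs_logLikRatio_le (hrange : ∀ k (z : Fin 2), logLikRatio q 1 k z ∈ Set.Icc m M)
    (i k : Fin 2) (z : ℕ) (hz : z = 0 ∨ z = 1) :
    |logLikRatio q i k z| ≤ max |m| |M| := by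
  have h : logLikRatio q 1 k z ∈ Set.Icc m M := by
    rcases hz with rfl | rfl
    exacts [hrange k 0, hrange k 1]
  have habs : |logLikRatio q 1 k z| ≤ max |m| |M| := abs_le_max_abs_abs h.1 h.2
  rcases Fin.exists_fin_two.mp ⟨i, rfl⟩ with rfl | rfl
  · rwa [logLikRatio_zero, abs_neg]
  · exact habs

lemma abs_logLikRatio_sub_le (hrange : ∀ k (z : Fin 2), logLikRatio q 1 k z ∈ Set.Icc m M)
    (i k : Fin 2) :
    |logLikRatio q i k 1 - logLikRatio q i k 0| ≤ M - m := by
  have h₁ := hrange k 1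
  have h₀ := hrange k 0
  simp only [Fin.val_one, Fin.val_zero, Set.mem_Icc] at h₀ h₁
  have habs : |logLikRatio q 1 k 1 - logLikRatio q 1 k 0| ≤ M - m := by
    rw [abs_le]; constructor <;> linarith
  rcases Fin.exists_fin_two.mp ⟨i, rfl⟩ with rfl | rfl
  · rwa [logLikRatio_zero, logLikRatio_zero, neg_sub_neg, abs_sub_comm]
  · exact habs

end LogLikRatio

section PricingProcess

variable {μ : Measure Ω} {ℱ : Filtration ℕ mΩ} {q : Fin 2 → Fin 2 → ℝ} {i : Fin 2}
  {a : ℕ → Ω → Fin 2} {y : ℕ → Ω → ℕ}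

lemma sum_logLikRatio_nonpos_of_ne (hpol : IsLRT q a y) {t : ℕ} {ω : Ω}
    (hne : a (t + 1) ω ≠ i) :
    ∑ j ∈ range t, logLikRatio q i (a (j + 1) ω) (y (j + 1) ω) ≤ 0 := by
  rcases Nat.eq_zero_or_pos t with rfl | ht
  · simp
  have hact := hpol t ht ω
  rcases Fin.exists_fin_two.mp ⟨i, rfl⟩ with rfl | rfl
  · simp only [logLikRatio_zero, sum_neg_distrib, neg_nonpos, ← LLR_eq_sum_range]
    by_contra hL
    exact hne (by rwa [if_neg hL] at hact)
  · rw [← LLR_eq_sum_range]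
    by_contra hL
    exact hne (by rwa [if_pos (not_le.1 hL).le] at hact)

lemma card_filter_ne_le_sum_exp (hpol : IsLRT q a y) {lam : ℝ} (hlam : 0 ≤ lam) (T : ℕ)
    (ω : Ω) :
    ((((Icc 1 T).filter (fun t => a t ω ≠ i)).card : ℕ) : ℝ)
      ≤ ∑ t ∈ range T, exp (∑ j ∈ range t, -lam * logLikRatio q i (a (j + 1) ω) (y (j + 1) ω)) := by
  rw [card_filter, Nat.cast_sum, sum_Icc_one_eq_sum_range]
  refine sum_le_sum fun t _ => ?_
  split_ifs with hne
  · rw [Nat.cast_one, ← mul_sum]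
    exact one_le_exp (mul_nonneg_of_nonpos_of_nonpos (neg_nonpos.2 hlam)
      (sum_logLikRatio_nonpos_of_ne hpol hne))
  · exact Nat.cast_zero.trans_le (exp_pos _).le

namespace IsPricingProcess

lemma measurable_logLikRatio (hproc : IsPricingProcess μ ℱ q i a y) (j : ℕ) :
    Measurable[ℱ (j + 1)] fun ω => logLikRatio q i (a (j + 1) ω) (y (j + 1) ω) := by
  have ha : Measurable[ℱ (j + 1)] (a (j + 1)) :=
    (hproc.meas_a (j + 1) (by omega)).mono (ℱ.mono (by omega)) le_rfl
  exact (measurable_of_countable fun p : Fin 2 × ℕ => logLikRatio q i p.1 p.2).comp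
    (ha.prodMk (hproc.meas_y (j + 1) (by omega)))

lemma condExp_exp_neg_logLikRatio_le [IsFiniteMeasure μ] (hproc : IsPricingProcess μ ℱ q i a y)
    (hq : ∀ k, q i k ∈ Set.Icc 0 1)
    {κ R : ℝ} (hκ : 0 ≤ κ) (hκ_le : ∀ k, κ ≤ klBern (q i k) (q (1 - i) k)) (hR : 0 < R)
    (hwidth : ∀ k, |logLikRatio q i k 1 - logLikRatio q i k 0| ≤ R) (t : ℕ) :
    μ[fun ω => exp (-(4 * κ / R ^ 2) * logLikRatio q i (a (t + 1) ω) (y (t + 1) ω)) | ℱ t]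
      ≤ᵐ[μ] fun _ => exp (-(2 * κ ^ 2 / R ^ 2)) := by
  have ha : Measurable[ℱ t] (a (t + 1)) := by simpa using hproc.meas_a (t + 1) (by omega)
  have hsale := hproc.sale_prob (t + 1) (by omega)
  rw [Nat.add_sub_cancel] at hsale
  have hY₁ : MeasurableSet {ω | y (t + 1) ω = 1} :=
    (hproc.meas_y (t + 1) (by omega)).mono (ℱ.le _) le_rfl (measurableSet_singleton 1)
  set φ : ℕ → Fin 2 → ℝ := fun z k => exp (-(4 * κ / R ^ 2) * logLikRatio q i k z)
  filter_upwards [condExp_comp_eq_of_condExp_indicator (ℱ.le t) (hproc.y_range (t + 1) (by omega))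
    hY₁ hsale (F := fun ω z => φ z (a (t + 1) ω))
    (fun z => ((measurable_of_countable (φ z)).comp ha).stronglyMeasurable)
    (fun z => (Integrable.of_finite (f := φ z)).comp_measurable (ha.mono (ℱ.le t) le_rfl))]
    with ω hω
  rw [hω]
  exact mul_exp_add_one_sub_mul_exp_le_exp_neg (hq _) hκ
    ((hκ_le _).trans (mean_logLikRatio i _).ge) hR (hwidth _)

lemma integral_card_filter_ne_le [IsProbabilityMeasure μ] (hproc : IsPricingProcess μ ℱ q i a y)
    (hpol : IsLRT q a y) (hq : ∀ k, q i k ∈ Set.Icc 0 1) {κ R B : ℝ} (hκ : 0 ≤ κ)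
    (hκ_le : ∀ k, κ ≤ klBern (q i k) (q (1 - i) k)) (hR : 0 < R)
    (hwidth : ∀ k, |logLikRatio q i k 1 - logLikRatio q i k 0| ≤ R)
    (hbound : ∀ k z, z = 0 ∨ z = 1 → |logLikRatio q i k z| ≤ B) (T : ℕ) :
    ∫ ω, (((Icc 1 T).filter (fun t => a t ω ≠ i)).card : ℝ) ∂μ
      ≤ ∑ t ∈ range T, exp (-(2 * κ ^ 2 / R ^ 2)) ^ t := by
  set lam := 4 * κ / R ^ 2
  have hlam : 0 ≤ lam := by positivity
  set D : ℕ → Ω → ℝ := fun j ω => -lam * logLikRatio q i (a (j + 1) ω) (y (j + 1) ω)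
  have hD_meas : ∀ j, Measurable[ℱ (j + 1)] (D j) := fun j =>
    (hproc.measurable_logLikRatio j).const_mul _
  have hD_le : ∀ j ω, D j ω ≤ lam * B := fun j ω => by
    have h := abs_le.1 (hbound (a (j + 1) ω) _ (hproc.y_range (j + 1) (by omega) ω))
    simpa [D] using mul_le_mul_of_nonneg_left (neg_le.1 h.1) hlam
  have hW_int := integrable_exp_sum_of_le (μ := μ) (fun j => (hD_meas j).mono (ℱ.le _) le_rfl) hD_le
  calc ∫ ω, (((Icc 1 T).filter (fun t => a t ω ≠ i)).card : ℝ) ∂μ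
      ≤ ∫ ω, ∑ t ∈ range T, exp (∑ j ∈ range t, D j ω) ∂μ :=
        integral_mono_of_nonneg (ae_of_all _ fun ω => Nat.cast_nonneg _)
          (integrable_finsetSum _ fun t _ => hW_int t)
          (ae_of_all _ (card_filter_ne_le_sum_exp hpol hlam T))
    _ = ∑ t ∈ range T, ∫ ω, exp (∑ j ∈ range t, D j ω) ∂μ :=
        integral_finsetSum _ fun t _ => hW_int t
    _ ≤ ∑ t ∈ range T, exp (-(2 * κ ^ 2 / R ^ 2)) ^ t :=
        sum_le_sum fun t _ => integral_exp_sum_le_pow hD_meas hD_le (exp_pos _).le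
          (hproc.condExp_exp_neg_logLikRatio_le hq hκ hκ_le hR hwidth) t

end IsPricingProcess

end PricingProcess

/-- **Theorem 1 (LRT achieves bounded regret — bounded expected number of suboptimal
selections).** If the true demand model is `i`, then `aᵢ = min_k I(q i k ‖ q (1-i) k) > 0` and
the expected number of times `t ∈ {1, …, T}` at which the LRT policy selects the suboptimal
arm is at most `1 + (M - m)² / (2 aᵢ²)`, uniformly in the horizon `T`. -/
theorem lrt_bounded_number_of_suboptimal_selections
    (μ : Measure Ω) [IsProbabilityMeasure μ] (ℱ : Filtration ℕ mΩ)
    (q : Fin 2 → Fin 2 → ℝ)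
    (hq : ∀ i k, q i k ∈ Set.Ioo (0 : ℝ) 1)
    (hni : ∀ k, q 0 k ≠ q 1 k)
    (i : Fin 2) (a : ℕ → Ω → Fin 2) (y : ℕ → Ω → ℕ)
    (hproc : IsPricingProcess μ ℱ q i a y)
    (hpol : IsLRT q a y)
    (ai m M : ℝ)
    (hai : ai = Finset.univ.inf' ⟨0, Finset.mem_univ 0⟩
      (fun k : Fin 2 => klBern (q i k) (q (1 - i) k)))
    (hm : m = Finset.univ.inf' ⟨(0, 0), Finset.mem_univ _⟩
      (fun p : Fin 2 × Fin 2 =>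
        Real.log (bern (q 1 p.1) (p.2 : ℕ) / bern (q 0 p.1) (p.2 : ℕ))))
    (hM : M = Finset.univ.sup' ⟨(0, 0), Finset.mem_univ _⟩
      (fun p : Fin 2 × Fin 2 =>
        Real.log (bern (q 1 p.1) (p.2 : ℕ) / bern (q 0 p.1) (p.2 : ℕ)))) :
    0 < ai ∧
      ∀ T : ℕ, 1 ≤ T →
        (∫ ω, (((Finset.Icc 1 T).filter (fun t => a t ω ≠ i)).card : ℝ) ∂μ)
          ≤ 1 + (M - m) ^ 2 / (2 * ai ^ 2) := by
  have hrange : ∀ k (z : Fin 2), logLikRatio q 1 k z ∈ Set.Icc m M := fun k z => by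
    rw [hm, hM]
    exact ⟨inf'_le _ (mem_univ (k, z)),
      le_sup' (fun p : Fin 2 × Fin 2 => logLikRatio q 1 p.1 p.2) (mem_univ (k, z))⟩
  have hR : 0 < M - m := by
    refine (abs_pos.2 (sub_ne_zero.2 ?_)).trans_le (abs_logLikRatio_sub_le hrange 1 0)
    simpa [logLikRatio, bern] using log_div_ne_log_one_sub_div (hq 1 0) (hq 0 0) (hni 0).symm
  have hai_pos : 0 < ai := by
    refine hai ▸ (lt_inf'_iff _).2 fun k _ => klBern_pos (hq i k) (hq (1 - i) k) ?_
    rcases Fin.exists_fin_two.mp ⟨i, rfl⟩ with rfl | rfl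
    exacts [hni k, (hni k).symm]
  refine ⟨hai_pos, fun T _ => (hproc.integral_card_filter_ne_le hpol
    (fun k => Set.Ioo_subset_Icc_self (hq i k)) hai_pos.le (fun k => hai ▸ inf'_le _ (mem_univ k))
    hR (abs_logLikRatio_sub_le hrange i) (abs_logLikRatio_le hrange i) T).trans ?_⟩
  simpa only [one_div_div] using
    sum_range_exp_neg_pow_le (div_pos (by positivity) (pow_pos hR 2)) T
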